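/- Let y : [0,1] → ℝ be α-Hölder continuous (0 < α < 1) and x : [0,1] → ℝ of bounded variation. Then the Young integral ∫_0^1 x(u) dy(u) exists as a limit of Riemann sums and satisfies |∫_0^1 x(u) dy(u) − x(0)(y(1) − y(0))| ≤ C_α ‖x‖_{BV} ‖y‖_α, where ‖x‖_{BV} is the total variation of x and ‖y‖_α the α-Hölder seminorm of y. -/

import Mathlib

/-!
Summation by parts turns the Riemann sums of `∫ x dy` into `x(1)y(1) − x(0)y(0)` minus the
Riemann–Stieltjes sums `S(t) = ∑ y(t_{k+1}) (x(t_{k+1}) − x(t_k))` of `∫ y dx`. Passing from a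
partition `t` to a refinement of it moves each tag of `S` by at most the mesh `δ` of `t`, so `S`
changes by at most `C_y δ^α` times the total variation of `x`. Comparing two partitions through
their common refinement makes `S` Cauchy as the mesh tends to zero, and comparing an arbitrary
partition with the trivial one `{0, 1}` gives the bound with `C_α = 1`.
-/

open Filter Set Finset
open scoped NNReal Topology

theorem HolderOnWith.abs_sub_le {C r : ℝ≥0} {y : ℝ → ℝ} {S : Set ℝ} (hy : HolderOnWith C r y S)
    {a b δ : ℝ} (ha : a ∈ S) (hb : b ∈ S) (hab : |a - b| ≤ δ) : |y a - y b| ≤ C * δ ^ (r : ℝ) := by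
  have h := hy.dist_le ha hb
  rw [Real.dist_eq, Real.dist_eq] at h
  exact h.trans (by gcongr)

namespace YoungIntegral

noncomputable def stieltjesSum (y x : ℝ → ℝ) (n : ℕ) (t : ℕ → ℝ) : ℝ :=
  ∑ i ∈ range n, y (t (i + 1)) * (x (t (i + 1)) - x (t i))

noncomputable def mesh (n : ℕ) (t : ℕ → ℝ) : ℝ :=
  ⨆ j : Fin n, (t (j + 1) - t j)

/-- A partition `a = t 0 ≤ t 1 ≤ ⋯ ≤ t n = b` of `[a, b]`, continued by `b` after `n`. -/
structure IsPartition (a b : ℝ) (n : ℕ) (t : ℕ → ℝ) : Prop where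
  monotone : Monotone t
  map_zero : t 0 = a
  eq_right : ∀ i, n ≤ i → t i = b

def IsRefinement (p : ℕ) (u : ℕ → ℝ) (n : ℕ) (t : ℕ → ℝ) : Prop :=
  ∃ c : ℕ → ℕ, Monotone c ∧ c 0 = 0 ∧ c n = p ∧ t = u ∘ c

variable {x y : ℝ → ℝ} {S : Set ℝ} {a b δ ε : ℝ} {n m p : ℕ} {t s u : ℕ → ℝ}

theorem sub_le_mesh {j : ℕ} (hj : j < n) : t (j + 1) - t j ≤ mesh n t :=
  le_ciSup (f := fun j : Fin n ↦ t (j + 1) - t j) (Set.finite_range _).bddAbove ⟨j, hj⟩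

theorem mesh_nonneg (ht : Monotone t) : 0 ≤ mesh n t :=
  Real.iSup_nonneg fun _ ↦ sub_nonneg.2 (ht (Nat.le_succ _))

theorem IsPartition.mem_Icc (ht : IsPartition a b n t) (i : ℕ) : t i ∈ Icc a b :=
  ⟨ht.map_zero ▸ ht.monotone (Nat.zero_le i),
    ht.eq_right _ (le_max_right i n) ▸ ht.monotone (le_max_left i n)⟩

theorem IsPartition.mem_image_range (ht : IsPartition a b n t) (i : ℕ) :
    t i ∈ (range (n + 1)).image t := by
  refine mem_image.2 ⟨min i n, mem_range.2 (by omega), ?_⟩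
  rcases le_total i n with h | h
  · rw [min_eq_left h]
  · rw [min_eq_right h, ht.eq_right n le_rfl, ht.eq_right i h]

theorem sum_abs_sub_le_toReal_eVariationOn (hx : eVariationOn x S ≠ ⊤) (hu : Monotone u)
    (huS : ∀ i, u i ∈ S) (n : ℕ) :
    ∑ i ∈ range n, |x (u (i + 1)) - x (u i)| ≤ (eVariationOn x S).toReal := by
  have h := ENNReal.toReal_mono hx (eVariationOn.sum_le (f := x) (n := n) hu huS)
  rw [ENNReal.toReal_sum fun i _ ↦ edist_ne_top _ _] at h
  simpa [edist_dist, Real.dist_eq] using h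

theorem abs_sum_Ico_sub_le (hu : Monotone u) (huS : ∀ i, u i ∈ S)
    (hy : ∀ a ∈ S, ∀ b ∈ S, |a - b| ≤ δ → |y a - y b| ≤ ε) {k l : ℕ} (hkl : k ≤ l)
    (hδ : u l - u k ≤ δ) :
    |∑ i ∈ Ico k l, y (u (i + 1)) * (x (u (i + 1)) - x (u i)) - y (u l) * (x (u l) - x (u k))|
      ≤ ε * ∑ i ∈ Ico k l, |x (u (i + 1)) - x (u i)| := by
  rw [← Finset.sum_Ico_sub (fun i ↦ x (u i)) hkl, Finset.mul_sum, ← Finset.sum_sub_distrib,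
    Finset.mul_sum]
  refine (abs_sum_le_sum_abs _ _).trans (sum_le_sum fun i hi ↦ ?_)
  obtain ⟨hki, hil⟩ := mem_Ico.1 hi
  rw [← sub_mul, abs_mul]
  refine mul_le_mul_of_nonneg_right (hy _ (huS _) _ (huS _) ?_) (abs_nonneg _)
  rw [abs_sub_comm, abs_of_nonneg (sub_nonneg.2 (hu hil))]
  linarith [hu (show k ≤ i + 1 by omega)]

theorem abs_stieltjesSum_comp_sub_le (hu : Monotone u) (huS : ∀ i, u i ∈ S)
    (hy : ∀ a ∈ S, ∀ b ∈ S, |a - b| ≤ δ → |y a - y b| ≤ ε) {c : ℕ → ℕ} (hc : Monotone c)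
    (hc0 : c 0 = 0) (hδ : ∀ j < n, u (c (j + 1)) - u (c j) ≤ δ) :
    |stieltjesSum y x (c n) u - stieltjesSum y x n (u ∘ c)|
      ≤ ε * ∑ i ∈ range (c n), |x (u (i + 1)) - x (u i)| := by
  induction n with
  | zero => simp [stieltjesSum, hc0]
  | succ n ih =>
    have hcn : c n ≤ c (n + 1) := hc n.le_succ
    have hblock := abs_sum_Ico_sub_le (x := x) hu huS hy hcn (hδ n n.lt_succ_self)
    have ih := ih fun j hj ↦ hδ j (by omega)
    have hsplit : stieltjesSum y x (c (n + 1)) u - stieltjesSum y x (n + 1) (u ∘ c)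
        = (stieltjesSum y x (c n) u - stieltjesSum y x n (u ∘ c))
          + (∑ i ∈ Ico (c n) (c (n + 1)), y (u (i + 1)) * (x (u (i + 1)) - x (u i))
            - y (u (c (n + 1))) * (x (u (c (n + 1))) - x (u (c n)))) := by
      rw [stieltjesSum, stieltjesSum, stieltjesSum, stieltjesSum, ← sum_range_add_sum_Ico _ hcn,
        sum_range_succ]
      simp only [Function.comp_apply]
      ring
    rw [hsplit, ← sum_range_add_sum_Ico _ hcn, mul_add]
    exact (abs_add_le _ _).trans (add_le_add ih hblock)

theorem abs_stieltjesSum_sub_le_of_isRefinement (hx : eVariationOn x S ≠ ⊤) (hu : Monotone u)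
    (huS : ∀ i, u i ∈ S) (hy : ∀ a ∈ S, ∀ b ∈ S, |a - b| ≤ δ → |y a - y b| ≤ ε)
    (hut : IsRefinement p u n t) (hδ : ∀ j < n, t (j + 1) - t j ≤ δ) (hε : 0 ≤ ε) :
    |stieltjesSum y x p u - stieltjesSum y x n t| ≤ ε * (eVariationOn x S).toReal := by
  obtain ⟨c, hc, hc0, rfl, rfl⟩ := hut
  exact (abs_stieltjesSum_comp_sub_le hu huS hy hc hc0 hδ).trans
    (mul_le_mul_of_nonneg_left (sum_abs_sub_le_toReal_eVariationOn hx hu huS _) hε)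

theorem isPartition_comp_clamp {k : ℕ} {f : Fin (k + 1) → ℝ} (hf : Monotone f) (hf0 : f 0 = a)
    (hfk : f (Fin.last k) = b) : IsPartition a b k (fun i ↦ f (Fin.clamp i k)) where
  monotone := hf.comp Fin.clamp_monotone
  map_zero := hf0
  eq_right i hi := by rw [Fin.clamp_eq_last i k hi, hfk]

theorem clamp_val {k : ℕ} (i : Fin (k + 1)) : Fin.clamp i k = i :=
  Fin.ext (by simp [Fin.coe_clamp]; omega)

theorem coe_orderIso_zero {A : Finset ℝ} (hA : ∀ r ∈ A, r ∈ Icc a b) {k : ℕ}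
    (e : Fin (k + 1) ≃o A) (ha : a ∈ A) : (e 0 : ℝ) = a := by
  have h := e.monotone (Fin.zero_le (e.symm ⟨a, ha⟩))
  rw [e.apply_symm_apply] at h
  exact le_antisymm h (hA _ (e 0).2).1

theorem coe_orderIso_last {A : Finset ℝ} (hA : ∀ r ∈ A, r ∈ Icc a b) {k : ℕ}
    (e : Fin (k + 1) ≃o A) (hb : b ∈ A) : (e (Fin.last k) : ℝ) = b := by
  have h := e.monotone (Fin.le_last (e.symm ⟨b, hb⟩))
  rw [e.apply_symm_apply] at h
  exact le_antisymm (hA _ (e _).2).2 h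

theorem isPartition_orderIso {A : Finset ℝ} (hA : ∀ r ∈ A, r ∈ Icc a b) {k : ℕ}
    (e : Fin (k + 1) ≃o A) (ha : a ∈ A) (hb : b ∈ A) :
    IsPartition a b k (fun i ↦ e (Fin.clamp i k)) :=
  isPartition_comp_clamp (fun _ _ hij ↦ e.monotone hij) (coe_orderIso_zero hA e ha)
    (coe_orderIso_last hA e hb)

theorem isRefinement_orderIso {A : Finset ℝ} (hA : ∀ r ∈ A, r ∈ Icc a b) {k : ℕ}
    (e : Fin (k + 1) ≃o A) (ht : IsPartition a b n t) (htA : ∀ i, t i ∈ A) :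
    IsRefinement k (fun i ↦ e (Fin.clamp i k)) n t := by
  have ha : t 0 = e 0 := ht.map_zero.trans (coe_orderIso_zero hA e (ht.map_zero ▸ htA 0)).symm
  have hb : t n = e (Fin.last k) :=
    (ht.eq_right n le_rfl).trans (coe_orderIso_last hA e (ht.eq_right n le_rfl ▸ htA n)).symm
  refine ⟨fun i ↦ e.symm ⟨t i, htA i⟩, fun i j hij ↦ e.symm.monotone (ht.monotone hij), ?_, ?_, ?_⟩
  · simp only [e.symm_apply_eq.2 (Subtype.ext ha : (⟨t 0, htA 0⟩ : A) = e 0), Fin.val_zero]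
  · simp only [e.symm_apply_eq.2 (Subtype.ext hb : (⟨t n, htA n⟩ : A) = e (Fin.last k)),
      Fin.val_last]
  · funext i
    simp only [Function.comp_apply, clamp_val, OrderIso.apply_symm_apply]

theorem exists_common_refinement (ht : IsPartition a b n t) (hs : IsPartition a b m s) :
    ∃ p u, IsPartition a b p u ∧ IsRefinement p u n t ∧ IsRefinement p u m s := by
  set A := (range (n + 1)).image t ∪ (range (m + 1)).image s
  have htA i : t i ∈ A := mem_union_left _ (ht.mem_image_range i)
  have hsA i : s i ∈ A := mem_union_right _ (hs.mem_image_range i)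
  have hA : ∀ r ∈ A, r ∈ Icc a b := by
    intro r hr
    rcases mem_union.1 hr with hr | hr <;> obtain ⟨i, -, rfl⟩ := mem_image.1 hr
    exacts [ht.mem_Icc i, hs.mem_Icc i]
  have hcard : A.card = A.card - 1 + 1 := (Nat.sub_add_cancel (card_pos.2 ⟨_, htA 0⟩)).symm
  set e := A.orderIsoOfFin hcard
  exact ⟨_, _, isPartition_orderIso hA e (ht.map_zero ▸ htA 0) (ht.eq_right n le_rfl ▸ htA n),
    isRefinement_orderIso hA e ht htA, isRefinement_orderIso hA e hs hsA⟩

theorem abs_stieltjesSum_sub_le {C α : ℝ≥0} (hx : eVariationOn x (Icc a b) ≠ ⊤)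
    (hy : HolderOnWith C α y (Icc a b)) (ht : IsPartition a b n t) (hs : IsPartition a b m s) :
    |stieltjesSum y x n t - stieltjesSum y x m s|
      ≤ C * mesh n t ^ (α : ℝ) * (eVariationOn x (Icc a b)).toReal
        + C * mesh m s ^ (α : ℝ) * (eVariationOn x (Icc a b)).toReal := by
  obtain ⟨p, u, hu, htu, hsu⟩ := exists_common_refinement ht hs
  have bound {n t} (htu : IsRefinement p u n t) (ht : Monotone t) :=
    abs_stieltjesSum_sub_le_of_isRefinement hx hu.monotone hu.mem_Icc
      (fun _ ha _ hb hab ↦ hy.abs_sub_le ha hb hab) htu (fun _ hj ↦ sub_le_mesh hj)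
      (by have := mesh_nonneg (n := n) ht; positivity)
  have h1 := bound htu ht.monotone
  have h2 := bound hsu hs.monotone
  rw [abs_sub_comm] at h1
  exact (abs_sub_le _ _ _).trans (add_le_add h1 h2)

theorem exists_forall_abs_sub_le {ι : Type*} {P : Set ι} {S g : ι → ℝ}
    (hS : ∀ i ∈ P, ∀ j ∈ P, |S i - S j| ≤ g i + g j) {v : ℕ → ι} (hv : ∀ N, v N ∈ P)
    (hg : Tendsto (g ∘ v) atTop (𝓝 0)) : ∃ J, ∀ i ∈ P, |S i - J| ≤ g i := by
  have hcauchy : CauchySeq (S ∘ v) := by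
    refine Metric.cauchySeq_iff'.2 fun ε hε ↦ ?_
    obtain ⟨N, hN⟩ := eventually_atTop.1 (hg.eventually (gt_mem_nhds (half_pos hε)))
    refine ⟨N, fun n hn ↦ ?_⟩
    simp only [Function.comp_apply, Real.dist_eq] at hN ⊢
    linarith [hS _ (hv n) _ (hv N), hN n hn, hN N le_rfl]
  obtain ⟨J, hJ⟩ := cauchySeq_tendsto_of_complete hcauchy
  refine ⟨J, fun i hi ↦ le_of_tendsto_of_tendsto' ((tendsto_const_nhds.sub hJ).abs)
    (by simpa using tendsto_const_nhds.add hg) fun N ↦ hS _ hi _ (hv N)⟩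

noncomputable def uniformPartition (a b : ℝ) (N j : ℕ) : ℝ :=
  min (a + (b - a) * j / (N + 1)) b

theorem isPartition_uniformPartition (hab : a ≤ b) (N : ℕ) :
    IsPartition a b (N + 1) (uniformPartition a b N) where
  monotone i j hij := by
    unfold uniformPartition
    gcongr
  map_zero := by simp [uniformPartition, hab]
  eq_right i hi := by
    have hi : (N : ℝ) + 1 ≤ i := by exact_mod_cast hi
    refine min_eq_right ?_
    rw [mul_div_assoc]
    have h1 : 1 ≤ (i : ℝ) / (N + 1) := (one_le_div (by positivity)).2 hi
    nlinarith

theorem mesh_uniformPartition_le (hab : a ≤ b) (N : ℕ) :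
    mesh (N + 1) (uniformPartition a b N) ≤ (b - a) / (N + 1) := by
  refine ciSup_le fun j ↦ ?_
  have hstep : a + (b - a) * ((j + 1 : ℕ) : ℝ) / (N + 1)
      = a + (b - a) * (j : ℕ) / (N + 1) + (b - a) / (N + 1) := by
    push_cast
    ring
  simp only [uniformPartition, hstep]
  rcases le_total (a + (b - a) * (j : ℕ) / (N + 1)) b with h | h
  · rw [min_eq_left h]
    linarith [min_le_left (a + (b - a) * (j : ℕ) / (N + 1) + (b - a) / (N + 1)) b]
  · rw [min_eq_right h]
    have : 0 ≤ (b - a) / (N + 1) := div_nonneg (by linarith) (by positivity)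
    linarith [min_le_right (a + (b - a) * (j : ℕ) / (N + 1) + (b - a) / (N + 1)) b]

theorem tendsto_mesh_uniformPartition (hab : a ≤ b) :
    Tendsto (fun N ↦ mesh (N + 1) (uniformPartition a b N)) atTop (𝓝 0) := by
  refine squeeze_zero (fun N ↦ mesh_nonneg (isPartition_uniformPartition hab N).monotone)
    (mesh_uniformPartition_le hab) ?_
  simpa [Function.comp_def] using
    (tendsto_const_div_atTop_nhds_zero_nat (b - a)).comp (tendsto_add_atTop_nat 1)

theorem tendsto_mul_rpow_mul_nhds_zero {ι : Type*} {l : Filter ι} {f : ι → ℝ}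
    (hf : Tendsto f l (𝓝 0)) {r : ℝ} (hr : 0 < r) (C V : ℝ) :
    Tendsto (fun i ↦ C * f i ^ r * V) l (𝓝 0) := by
  simpa [Real.zero_rpow hr.ne'] using ((hf.rpow_const (Or.inr hr.le)).const_mul C).mul_const V

theorem exists_forall_abs_stieltjesSum_sub_le {C α : ℝ≥0} (hα : 0 < α) (hab : a ≤ b)
    (hx : eVariationOn x (Icc a b) ≠ ⊤) (hy : HolderOnWith C α y (Icc a b)) :
    ∃ J, ∀ n t, IsPartition a b n t →
      |stieltjesSum y x n t - J| ≤ C * mesh n t ^ (α : ℝ) * (eVariationOn x (Icc a b)).toReal := by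
  obtain ⟨J, hJ⟩ := exists_forall_abs_sub_le (P := {q : ℕ × (ℕ → ℝ) | IsPartition a b q.1 q.2})
    (fun _ hq _ hr ↦ abs_stieltjesSum_sub_le hx hy hq hr)
    (v := fun N ↦ (N + 1, uniformPartition a b N)) (isPartition_uniformPartition hab)
    (tendsto_mul_rpow_mul_nhds_zero (tendsto_mesh_uniformPartition hab) (NNReal.coe_pos.2 hα) _ _)
  exact ⟨J, fun n t ht ↦ hJ (n, t) ht⟩

theorem sum_range_mul_sub_eq (x y : ℝ → ℝ) (n : ℕ) (t : ℕ → ℝ) :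
    ∑ j ∈ range n, x (t j) * (y (t (j + 1)) - y (t j))
      = x (t n) * y (t n) - x (t 0) * y (t 0) - stieltjesSum y x n t := by
  rw [stieltjesSum, ← sum_range_sub (fun j ↦ x (t j) * y (t j)), ← sum_sub_distrib]
  exact sum_congr rfl fun j _ ↦ by ring

theorem stieltjesSum_of_isPartition_one (ht : IsPartition a b 1 t) :
    stieltjesSum y x 1 t = y b * (x b - x a) := by
  simp [stieltjesSum, ht.map_zero, ht.eq_right 1 le_rfl]

theorem clamp_castSucc {K : ℕ} (k : Fin K) : Fin.clamp k K = k.castSucc :=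
  Fin.ext (by simp [Fin.coe_clamp])

theorem clamp_succ {K : ℕ} (k : Fin K) : Fin.clamp (k + 1) K = k.succ :=
  Fin.ext (by simp [Fin.coe_clamp])

theorem mesh_comp_clamp {K : ℕ} (f : Fin (K + 1) → ℝ) :
    mesh K (fun j ↦ f (Fin.clamp j K)) = ⨆ k : Fin K, (f k.succ - f k.castSucc) := by
  simp only [mesh, clamp_castSucc, clamp_succ]

theorem sum_fin_mul_sub_eq_sum_range {K : ℕ} (f : Fin (K + 1) → ℝ) :
    ∑ k : Fin K, x (f k.castSucc) * (y (f k.succ) - y (f k.castSucc))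
      = ∑ j ∈ range K,
          x (f (Fin.clamp j K)) * (y (f (Fin.clamp (j + 1) K)) - y (f (Fin.clamp j K))) := by
  rw [← Fin.sum_univ_eq_sum_range
    (fun j ↦ x (f (Fin.clamp j K)) * (y (f (Fin.clamp (j + 1) K)) - y (f (Fin.clamp j K))))]
  simp only [clamp_castSucc, clamp_succ]

end YoungIntegral

open YoungIntegral

theorem stmt15_general (α : NNReal) (hα0 : 0 < α) :
    ∃ C : ℝ, 0 < C ∧
      ∀ (x y : ℝ → ℝ) (Cy : NNReal),
        eVariationOn x (Set.Icc 0 1) ≠ ⊤ →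
        HolderOnWith Cy α y (Set.Icc 0 1) →
        ∃ I : ℝ,
          (∀ (K : ℕ → ℕ) (tt : (n : ℕ) → Fin (K n + 1) → ℝ),
            (∀ n, tt n 0 = 0) → (∀ n, tt n (Fin.last (K n)) = 1) →
            (∀ n, Monotone (tt n)) → (∀ n k, tt n k ∈ Set.Icc (0 : ℝ) 1) →
            Tendsto (fun n => ⨆ k : Fin (K n), (tt n k.succ - tt n k.castSucc))
              atTop (nhds 0) →
            Tendsto (fun n => ∑ k : Fin (K n),
              x (tt n k.castSucc) * (y (tt n k.succ) - y (tt n k.castSucc)))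
              atTop (nhds I)) ∧
          |I - x 0 * (y 1 - y 0)| ≤ C * (eVariationOn x (Set.Icc 0 1)).toReal * Cy := by
  refine ⟨1, one_pos, fun x y Cy hx hy ↦ ?_⟩
  obtain ⟨J, hJ⟩ := exists_forall_abs_stieltjesSum_sub_le hα0 zero_le_one hx hy
  refine ⟨x 1 * y 1 - x 0 * y 0 - J, fun K tt h0 h1 hmono _ hmesh ↦ ?_, ?_⟩
  · have hT n := isPartition_comp_clamp (hmono n) (h0 n) (h1 n)
    have hS : Tendsto (fun n ↦ stieltjesSum y x (K n) fun j ↦ tt n (Fin.clamp j (K n)))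
        atTop (𝓝 J) := by
      refine tendsto_iff_dist_tendsto_zero.2 (squeeze_zero (fun _ ↦ dist_nonneg)
        (fun n ↦ (Real.dist_eq _ _).trans_le (hJ _ _ (hT n))) ?_)
      simpa only [mesh_comp_clamp] using
        tendsto_mul_rpow_mul_nhds_zero hmesh (NNReal.coe_pos.2 hα0) _ _
    refine (tendsto_const_nhds.sub hS).congr fun n ↦ ?_
    rw [sum_fin_mul_sub_eq_sum_range, sum_range_mul_sub_eq, (hT n).map_zero,
      (hT n).eq_right _ le_rfl]
  · have htriv := isPartition_uniformPartition (zero_le_one' ℝ) 0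
    have hmesh : mesh 1 (uniformPartition 0 1 0) ^ (α : ℝ) ≤ 1 :=
      Real.rpow_le_one (mesh_nonneg htriv.monotone)
        (by simpa using mesh_uniformPartition_le (zero_le_one' ℝ) 0) α.2
    have hJ1 := hJ _ _ htriv
    rw [stieltjesSum_of_isPartition_one htriv] at hJ1
    calc |x 1 * y 1 - x 0 * y 0 - J - x 0 * (y 1 - y 0)| = |y 1 * (x 1 - x 0) - J| := by
          ring_nf
      _ ≤ Cy * 1 * (eVariationOn x (Icc 0 1)).toReal := hJ1.trans (by gcongr)
      _ = 1 * (eVariationOn x (Icc 0 1)).toReal * Cy := by ring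

/-- Young's inequality (Young 1936): for `0 < α < 1` there is a constant `C_α` such that for
every `x : [0,1] → ℝ` of bounded variation and every `α`-Hölder `y : [0,1] → ℝ` (with Hölder
constant `C_y`), the Young integral `∫_0^1 x dy` exists as the limit of Riemann sums along
every sequence of partitions with mesh tending to zero, and
`|∫_0^1 x dy − x(0)(y(1) − y(0))| ≤ C_α ‖x‖_BV C_y`. -/
theorem stmt15 (α : NNReal) (hα0 : 0 < α) (hα1 : α < 1) :
    ∃ C : ℝ, 0 < C ∧
      ∀ (x y : ℝ → ℝ) (Cy : NNReal),
        eVariationOn x (Set.Icc 0 1) ≠ ⊤ →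
        HolderOnWith Cy α y (Set.Icc 0 1) →
        ∃ I : ℝ,
          (∀ (K : ℕ → ℕ) (tt : (n : ℕ) → Fin (K n + 1) → ℝ),
            (∀ n, tt n 0 = 0) → (∀ n, tt n (Fin.last (K n)) = 1) →
            (∀ n, Monotone (tt n)) → (∀ n k, tt n k ∈ Set.Icc (0 : ℝ) 1) →
            Tendsto (fun n => ⨆ k : Fin (K n), (tt n k.succ - tt n k.castSucc))
              atTop (nhds 0) →
            Tendsto (fun n => ∑ k : Fin (K n),
              x (tt n k.castSucc) * (y (tt n k.succ) - y (tt n k.castSucc)))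
              atTop (nhds I)) ∧
          |I - x 0 * (y 1 - y 0)| ≤ C * (eVariationOn x (Set.Icc 0 1)).toReal * Cy :=
  stmt15_general α hα0
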